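/- Let f be an irreducible homogeneous polynomial of even degree and F ∈ S homogeneous with θ(F) = f. If a_{ij} (for 0 ≤ i ≤ j ≤ 2) and B are homogeneous elements of S with Σ a_{ij}Δ_{ij} + B·F = 0, then B lies in the ideal generated by the six minors Δ_{ij}. -/
import Mathlib

open MvPolynomial

noncomputable def theta (k : Type*) [CommRing k] :
    MvPolynomial (Fin 6) k →ₐ[k] MvPolynomial (Fin 3) k :=
  MvPolynomial.aeval
    ![X 0 * X 0, X 0 * X 1, X 0 * X 2, X 1 * X 1, X 1 * X 2, X 2 * X 2]

noncomputable def Delta (k : Type*) [CommRing k] : Fin 6 → MvPolynomial (Fin 6) k :=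
  ![X 3 * X 5 - X 4 * X 4,
    X 1 * X 5 - X 4 * X 2,
    X 1 * X 4 - X 2 * X 3,
    X 0 * X 5 - X 2 * X 2,
    X 0 * X 4 - X 2 * X 1,
    X 0 * X 3 - X 1 * X 1]

namespace SyzygyAux

variable {k : Type*} [Field k]

lemma vec5 : (![X 0 * X 0, X 0 * X 1, X 0 * X 2, X 1 * X 1, X 1 * X 2, X 2 * X 2] :
    Fin 6 → MvPolynomial (Fin 3) k) 5 = X 2 * X 2 := rfl

lemma theta_X (j : Fin 6) : theta k (X j) =
    ![X 0 * X 0, X 0 * X 1, X 0 * X 2, X 1 * X 1, X 1 * X 2, X 2 * X 2] j := by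
  rw [theta, aeval_X]

lemma theta_Delta (i : Fin 6) : theta k (Delta k i) = 0 := by
  have t : ∀ p q r s : Fin 6, theta k (X p * X q - X r * X s)
      = theta k (X p) * theta k (X q) - theta k (X r) * theta k (X s) := by
    intro p q r s; simp
  fin_cases i <;>
    · show theta k (X _ * X _ - X _ * X _) = 0
      rw [t]
      simp only [theta_X, Matrix.cons_val_zero, Matrix.cons_val_one, Matrix.head_cons,
        Matrix.cons_val_two, Matrix.tail_cons, Matrix.cons_val_three, Matrix.cons_val_four,
        vec5]
      ring

noncomputable def T (m : Fin 6 →₀ ℕ) : Fin 3 →₀ ℕ :=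
  Finsupp.single 0 (2 * m 0 + m 1 + m 2) + Finsupp.single 1 (m 1 + 2 * m 3 + m 4)
    + Finsupp.single 2 (m 2 + m 4 + 2 * m 5)

lemma theta_monomial (m : Fin 6 →₀ ℕ) (c : k) :
    theta k (monomial m c) = monomial (T m) c := by
  rw [theta, aeval_monomial, Finsupp.prod_fintype _ _ (fun i => pow_zero _)]
  rw [Fin.prod_univ_six]
  have hR : (monomial (T m) c : MvPolynomial (Fin 3) k)
      = C c * X 0 ^ (2 * m 0 + m 1 + m 2) * X 1 ^ (m 1 + 2 * m 3 + m 4)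
        * X 2 ^ (m 2 + m 4 + 2 * m 5) := by
    simp [T, X_pow_eq_monomial, C_mul_monomial, monomial_mul]
  rw [hR]
  simp only [Matrix.cons_val_zero, Matrix.cons_val_one, Matrix.head_cons,
    Matrix.cons_val_two, Matrix.tail_cons, Matrix.cons_val_three, Matrix.cons_val_four,
    Matrix.cons_val_fin_one, vec5, algebraMap_eq]
  ring

noncomputable def Idl (k : Type*) [Field k] : Ideal (MvPolynomial (Fin 6) k) :=
  Ideal.span (Set.range (Delta k))

noncomputable def NF (k : Type*) [Field k] : Submodule k (MvPolynomial (Fin 6) k) :=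
  Submodule.span k {P | ∃ m : Fin 6 →₀ ℕ, m 1 + m 2 + m 4 ≤ 1 ∧ P = monomial m 1}

lemma reduce_case (m : Fin 6 →₀ ℕ) (i j s t : Fin 6)
    (hle : Finsupp.single i 1 + Finsupp.single j 1 ≤ m)
    (hd : (X i * X j - X s * X t : MvPolynomial (Fin 6) k) ∈ Idl k) :
    ∃ m' : Fin 6 →₀ ℕ,
      (∀ a, m' a + ((Finsupp.single i 1 + Finsupp.single j 1 : Fin 6 →₀ ℕ)) a
            = m a + ((Finsupp.single s 1 + Finsupp.single t 1 : Fin 6 →₀ ℕ)) a) ∧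
      (monomial m (1:k) - monomial m' 1) ∈ Idl k := by
  set base := m - (Finsupp.single i 1 + Finsupp.single j 1) with hbase
  have hbm : base + (Finsupp.single i 1 + Finsupp.single j 1) = m :=
    tsub_add_cancel_of_le hle
  refine ⟨base + (Finsupp.single s 1 + Finsupp.single t 1), ?_, ?_⟩
  · intro a
    rw [← hbm]
    simp only [Finsupp.add_apply]
    omega
  · have e1 : (monomial m (1:k)) = monomial base 1 * (X i * X j) := by
      rw [← hbm]; simp [X, monomial_mul, add_assoc]
    have e2 : (monomial (base + (Finsupp.single s 1 + Finsupp.single t 1)) (1:k))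
        = monomial base 1 * (X s * X t) := by
      simp [X, monomial_mul, add_assoc]
    rw [e1, e2, ← mul_sub]
    exact Ideal.mul_mem_left _ _ hd

lemma case_finish (m : Fin 6 →₀ ℕ) (i j s t : Fin 6)
    (hle : Finsupp.single i 1 + Finsupp.single j 1 ≤ m)
    (hd : (X i * X j - X s * X t : MvPolynomial (Fin 6) k) ∈ Idl k)
    (hdec : ∀ m' : Fin 6 →₀ ℕ,
      (∀ a, m' a + ((Finsupp.single i 1 + Finsupp.single j 1 : Fin 6 →₀ ℕ)) a
            = m a + ((Finsupp.single s 1 + Finsupp.single t 1 : Fin 6 →₀ ℕ)) a) →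
      m' 1 + m' 2 + m' 4 < m 1 + m 2 + m 4)
    (IH : ∀ m' : Fin 6 →₀ ℕ, m' 1 + m' 2 + m' 4 < m 1 + m 2 + m 4 →
      monomial m' (1:k) ∈ NF k ⊔ (Idl k).restrictScalars k) :
    monomial m (1:k) ∈ NF k ⊔ (Idl k).restrictScalars k := by
  obtain ⟨m', key, hdiff⟩ := reduce_case m i j s t hle hd
  have hm : monomial m (1:k) = (monomial m 1 - monomial m' 1) + monomial m' 1 := by ring
  rw [hm]
  exact Submodule.add_mem _ (Submodule.mem_sup_right hdiff) (IH m' (hdec m' key))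

lemma delta_mem (i : Fin 6) : Delta k i ∈ Idl k :=
  Ideal.subset_span (Set.mem_range_self i)

lemma dd0 : Delta k 0 = X 3 * X 5 - X 4 * X 4 := rfl
lemma dd1 : Delta k 1 = X 1 * X 5 - X 4 * X 2 := rfl
lemma dd2 : Delta k 2 = X 1 * X 4 - X 2 * X 3 := rfl
lemma dd3 : Delta k 3 = X 0 * X 5 - X 2 * X 2 := rfl
lemma dd4 : Delta k 4 = X 0 * X 4 - X 2 * X 1 := rfl
lemma dd5 : Delta k 5 = X 0 * X 3 - X 1 * X 1 := rfl

lemma monomial_mem (m : Fin 6 →₀ ℕ) :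
    monomial m (1:k) ∈ NF k ⊔ (Idl k).restrictScalars k := by
  generalize hn : m 1 + m 2 + m 4 = n
  induction n using Nat.strong_induction_on generalizing m with
  | _ n IH =>
  subst hn
  by_cases hw : m 1 + m 2 + m 4 ≤ 1
  · exact Submodule.mem_sup_left (Submodule.subset_span ⟨m, hw, rfl⟩)
  · have IH' : ∀ m' : Fin 6 →₀ ℕ, m' 1 + m' 2 + m' 4 < m 1 + m 2 + m 4 →
        monomial m' (1:k) ∈ NF k ⊔ (Idl k).restrictScalars k :=
      fun m' h => IH _ h m' rfl
    have hcases : 2 ≤ m 1 ∨ 2 ≤ m 2 ∨ 2 ≤ m 4 ∨ (1 ≤ m 1 ∧ 1 ≤ m 2)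
        ∨ (1 ≤ m 1 ∧ 1 ≤ m 4) ∨ (1 ≤ m 2 ∧ 1 ≤ m 4) := by omega
    rcases hcases with h | h | h | ⟨h, h'⟩ | ⟨h, h'⟩ | ⟨h, h'⟩
    · refine case_finish m 1 1 0 3 ?_ ?_ ?_ IH'
      · rw [Finsupp.le_def]; intro a; fin_cases a <;>
          simp [Finsupp.single_apply] <;> omega
      · have e : (X 1 * X 1 - X 0 * X 3 : MvPolynomial (Fin 6) k) = -Delta k 5 := by
          rw [dd5]; ring
        rw [e]; exact neg_mem (delta_mem 5)
      · intro m' key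
        have k1 := key 1; have k2 := key 2; have k4 := key 4
        simp +decide [Finsupp.add_apply, Finsupp.single_apply] at k1 k2 k4; omega
    · refine case_finish m 2 2 0 5 ?_ ?_ ?_ IH'
      · rw [Finsupp.le_def]; intro a; fin_cases a <;>
          simp [Finsupp.single_apply] <;> omega
      · have e : (X 2 * X 2 - X 0 * X 5 : MvPolynomial (Fin 6) k) = -Delta k 3 := by
          rw [dd3]; ring
        rw [e]; exact neg_mem (delta_mem 3)
      · intro m' key
        have k1 := key 1; have k2 := key 2; have k4 := key 4
        simp +decide [Finsupp.add_apply, Finsupp.single_apply] at k1 k2 k4; omega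
    · refine case_finish m 4 4 3 5 ?_ ?_ ?_ IH'
      · rw [Finsupp.le_def]; intro a; fin_cases a <;>
          simp [Finsupp.single_apply] <;> omega
      · have e : (X 4 * X 4 - X 3 * X 5 : MvPolynomial (Fin 6) k) = -Delta k 0 := by
          rw [dd0]; ring
        rw [e]; exact neg_mem (delta_mem 0)
      · intro m' key
        have k1 := key 1; have k2 := key 2; have k4 := key 4
        simp +decide [Finsupp.add_apply, Finsupp.single_apply] at k1 k2 k4; omega
    · refine case_finish m 1 2 0 4 ?_ ?_ ?_ IH'
      · rw [Finsupp.le_def]; intro a; fin_cases a <;>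
          simp [Finsupp.single_apply] <;> omega
      · have e : (X 1 * X 2 - X 0 * X 4 : MvPolynomial (Fin 6) k) = -Delta k 4 := by
          rw [dd4]; ring
        rw [e]; exact neg_mem (delta_mem 4)
      · intro m' key
        have k1 := key 1; have k2 := key 2; have k4 := key 4
        simp +decide [Finsupp.add_apply, Finsupp.single_apply] at k1 k2 k4; omega
    · refine case_finish m 1 4 2 3 ?_ ?_ ?_ IH'
      · rw [Finsupp.le_def]; intro a; fin_cases a <;>
          simp [Finsupp.single_apply] <;> omega
      · have e : (X 1 * X 4 - X 2 * X 3 : MvPolynomial (Fin 6) k) = Delta k 2 := by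
          rw [dd2]
        rw [e]; exact delta_mem 2
      · intro m' key
        have k1 := key 1; have k2 := key 2; have k4 := key 4
        simp +decide [Finsupp.add_apply, Finsupp.single_apply] at k1 k2 k4; omega
    · refine case_finish m 2 4 1 5 ?_ ?_ ?_ IH'
      · rw [Finsupp.le_def]; intro a; fin_cases a <;>
          simp [Finsupp.single_apply] <;> omega
      · have e : (X 2 * X 4 - X 1 * X 5 : MvPolynomial (Fin 6) k) = -Delta k 1 := by
          rw [dd1]; ring
        rw [e]; exact neg_mem (delta_mem 1)
      · intro m' key
        have k1 := key 1; have k2 := key 2; have k4 := key 4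
        simp +decide [Finsupp.add_apply, Finsupp.single_apply] at k1 k2 k4; omega

lemma all_mem (P : MvPolynomial (Fin 6) k) :
    P ∈ NF k ⊔ (Idl k).restrictScalars k := by
  rw [P.as_sum]
  refine Submodule.sum_mem _ fun m _ => ?_
  have : (monomial m (coeff m P) : MvPolynomial (Fin 6) k)
      = coeff m P • monomial m 1 := by
    rw [smul_monomial, smul_eq_mul, mul_one]
  rw [this]
  exact Submodule.smul_mem _ _ (monomial_mem m)

lemma T_inj {m m' : Fin 6 →₀ ℕ} (hm : m 1 + m 2 + m 4 ≤ 1)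
    (hm' : m' 1 + m' 2 + m' 4 ≤ 1) (h : T m = T m') : m = m' := by
  have h0 := congrArg (fun u : Fin 3 →₀ ℕ => u 0) h
  have h1 := congrArg (fun u : Fin 3 →₀ ℕ => u 1) h
  have h2 := congrArg (fun u : Fin 3 →₀ ℕ => u 2) h
  simp +decide [T, Finsupp.add_apply, Finsupp.single_apply] at h0 h1 h2
  ext a
  fin_cases a <;> simp <;> omega

lemma NF_ker (Q : MvPolynomial (Fin 6) k) (hQ : Q ∈ NF k) (h0 : theta k Q = 0) :
    Q = 0 := by
  have hsupp : ∀ u ∈ Q.support, u 1 + u 2 + u 4 ≤ 1 := by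
    clear h0
    induction hQ using Submodule.span_induction with
    | mem x hx =>
      obtain ⟨m, hm, rfl⟩ := hx
      intro u hu
      rw [Finset.mem_singleton.mp (Finset.mem_of_subset support_monomial_subset hu)]
      exact hm
    | zero => simp
    | add x y hx hy ihx ihy =>
      intro u hu
      rcases Finset.mem_union.mp (MvPolynomial.support_add hu) with h | h
      exacts [ihx u h, ihy u h]
    | smul c x hx ih =>
      intro u hu
      exact ih u (MvPolynomial.support_smul hu)
  have key : ∀ u ∈ Q.support, coeff u Q = 0 := by
    intro u hu
    have hc : coeff (T u) (theta k Q) = coeff u Q := by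
      conv_lhs => rw [Q.as_sum, map_sum]
      simp only [theta_monomial]
      rw [coeff_sum]
      rw [Finset.sum_eq_single_of_mem u hu]
      · simp [coeff_monomial]
      · intro v hv hvu
        rw [coeff_monomial, if_neg]
        intro hT
        exact hvu (T_inj (hsupp v hv) (hsupp u hu) hT)
    rw [h0] at hc
    simpa using hc.symm
  ext u
  by_cases hu : u ∈ Q.support
  · simpa using key u hu
  · simpa using MvPolynomial.notMem_support_iff.mp hu

lemma ker_theta_sub (B : MvPolynomial (Fin 6) k) (hB : theta k B = 0) :
    B ∈ Ideal.span (Set.range (Delta k)) := by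
  obtain ⟨q, hq, w, hw, hqw⟩ := Submodule.mem_sup.mp (all_mem B)
  have hwI : w ∈ Idl k := hw
  have hθw : theta k w = 0 := by
    have hle : Idl k ≤ RingHom.ker (theta k).toRingHom := by
      rw [Idl, Ideal.span_le]
      rintro _ ⟨j, rfl⟩
      exact theta_Delta j
    exact hle hwI
  have hθq : theta k q = 0 := by
    have := congrArg (theta k) hqw
    rw [map_add, hθw, add_zero] at this
    rw [this, hB]
  have hq0 : q = 0 := NF_ker q hq hθq
  rw [← hqw, hq0, zero_add]
  exact hwI

end SyzygyAux

theorem syzygy_coefficient_of_F_in_minors_ideal (k : Type*) [Field k]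
    (f : MvPolynomial (Fin 3) k) (m : ℕ) (hfirr : Irreducible f)
    (hf : f.IsHomogeneous (2 * m))
    (F : MvPolynomial (Fin 6) k) (n : ℕ) (hF : F.IsHomogeneous n)
    (hθF : theta k F = f)
    (a : Fin 6 → MvPolynomial (Fin 6) k) (da : Fin 6 → ℕ)
    (ha : ∀ i, (a i).IsHomogeneous (da i))
    (B : MvPolynomial (Fin 6) k) (dB : ℕ) (hB : B.IsHomogeneous dB)
    (hrel : ∑ i : Fin 6, a i * Delta k i + B * F = 0) :
    B ∈ Ideal.span (Set.range (Delta k)) := by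
  have h1 : theta k B * f = 0 := by
    have := congrArg (theta k) hrel
    rw [map_add, map_sum, map_mul, hθF, map_zero] at this
    simpa [SyzygyAux.theta_Delta] using this
  have hf0 : f ≠ 0 := hfirr.ne_zero
  have hB0 : theta k B = 0 := by
    rcases mul_eq_zero.mp h1 with h | h
    · exact h
    · exact absurd h hf0
  exact SyzygyAux.ker_theta_sub B hB0
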